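/- Let 1 ≤ d₁ < d₂ ≤ 2(q−1) with d₁ ≢ d₂ (mod q−1). There exists a homogeneous polynomial f ∈ S of degree d₁ whose coefficient of x₂^{d₁} is nonzero and such that ev(f) ∈ PRM_{d₂}(q,2) if and only if d₁ ≥ q. -/

import Mathlib

open MvPolynomial

/-- The fixed representatives of the points of the projective plane over `F`:
the leftmost nonzero coordinate equals 1. -/
def stdRep (F : Type*) [Field F] : Set (Fin 3 → F) :=
  {v | v 0 = 1 ∨ (v 0 = 0 ∧ v 1 = 1) ∨ (v 0 = 0 ∧ v 1 = 0 ∧ v 2 = 1)}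

/-- The evaluation map at the fixed representatives. -/
noncomputable def ev (F : Type*) [Field F] :
    MvPolynomial (Fin 3) F →ₗ[F] (stdRep F → F) :=
  LinearMap.pi fun Q => (aeval (Q : Fin 3 → F)).toLinearMap

/-- The projective Reed–Muller code of degree `d` over the projective plane. -/
noncomputable def PRM (F : Type*) [Field F] (d : ℕ) : Submodule F (stdRep F → F) :=
  (homogeneousSubmodule (Fin 3) F d).map (ev F)

/-!
Write `r = q - 1`. The power sum `∑ x : F, x ^ e` is `-1` when `e` is a positive multiple of `r`
and `0` otherwise, so summing over the points of the plane kills every form of degree `2r`.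
If `d₁ < q` and `ev f = ev g` with `deg g = d₂`, multiply both by a monomial `M` of degree
`2r - d₂`: the plane sum of `M g` vanishes, while for `M = x₁^(r - (d₂ - d₁)) x₂^(r - d₁)` (when
`d₂ - d₁ < r`) or `M = x₂^(2r - d₂)` (when `d₂ - d₁ > r`) the plane sum of `M f` is `∓` the
coefficient of `x₂^d₁` in `f`. Conversely, for `d₁ ≥ q` the identity `x ^ (m + r) = x ^ m`
(`m ≠ 0`) on `F` lets one write down a form of degree `d₂` with the same values as
`x₂^d₁ + x₁^(r - k) x₂^(d₁ - r + k)`, where `k = d₂ - d₁`.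
-/

namespace FiniteField

variable {F : Type*} [Field F] [Fintype F]

theorem sum_pow_eq_ite {e : ℕ} (he : e ≠ 0) :
    ∑ x : F, x ^ e = if Fintype.card F - 1 ∣ e then -1 else 0 := by
  classical
  rw [← sum_pow_units, ← Fintype.sum_subtype_add_sum_subtype (· ≠ 0) (· ^ e),
    ← Fintype.sum_equiv unitsEquivNeZero (fun x : Fˣ => (x : F) ^ e) _ (fun _ => rfl),
    Fintype.sum_eq_zero (fun x : {x : F // ¬x ≠ 0} => (x : F) ^ e)
      fun x => by rw [not_not.mp x.2, zero_pow he], add_zero]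

theorem sum_pow_of_le_two_mul {e : ℕ} (he : e ≤ 2 * (Fintype.card F - 1)) :
    ∑ x : F, x ^ e =
      if e = Fintype.card F - 1 ∨ e = 2 * (Fintype.card F - 1) then -1 else 0 := by
  have hq : 1 < Fintype.card F := Fintype.one_lt_card
  rcases eq_or_ne e 0 with rfl | he₀
  · rw [sum_pow_lt_card_sub_one (K := F) 0 (by omega), if_neg (by omega)]
  rw [sum_pow_eq_ite he₀]
  congr 1
  refine propext ⟨fun ⟨m, hm⟩ => ?_, ?_⟩
  · have : m ≤ 2 :=
      Nat.le_of_mul_le_mul_left (c := Fintype.card F - 1) (by omega) (by omega)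
    interval_cases m <;> omega
  · rintro (h | h)
    exacts [h ▸ dvd_rfl, h ▸ dvd_mul_left _ _]

theorem pow_add_card_sub_one (x : F) {m : ℕ} (hm : m ≠ 0) :
    x ^ (m + (Fintype.card F - 1)) = x ^ m := by
  rcases eq_or_ne x 0 with rfl | hx
  · rw [zero_pow hm, zero_pow (by omega)]
  · rw [pow_add, pow_card_sub_one_eq_one x hx, mul_one]

end FiniteField

namespace MvPolynomial.IsHomogeneous

variable {σ R : Type*} [DecidableEq σ] [CommSemiring R] {p : MvPolynomial σ R} {n : ℕ}

theorem linearMap_apply_eq_coeff_mul (hp : p.IsHomogeneous n) (φ : MvPolynomial σ R →ₗ[R] R)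
    (u₀ : σ →₀ ℕ) (a : R)
    (hφ : ∀ u : σ →₀ ℕ, u.degree = n → φ (monomial u 1) = if u = u₀ then a else 0) :
    φ p = coeff u₀ p * a := by
  have hsupp : ∀ u ∈ p.support, u.degree = n := fun u hu => by
    by_contra h
    exact mem_support_iff.mp hu (hp.coeff_eq_zero h)
  conv_lhs => rw [p.as_sum]
  rw [map_sum, Finset.sum_congr rfl fun u hu => by
    rw [← mul_one (coeff u p), ← smul_eq_mul, ← smul_monomial, map_smul, hφ u (hsupp u hu)]]
  simp only [smul_eq_mul, mul_ite, mul_zero, Finset.sum_ite_eq']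
  split_ifs with h
  · rfl
  · rw [notMem_support_iff.mp h, zero_mul]

theorem linearMap_apply_eq_zero (hp : p.IsHomogeneous n) (φ : MvPolynomial σ R →ₗ[R] R)
    (hφ : ∀ u : σ →₀ ℕ, u.degree = n → φ (monomial u 1) = 0) : φ p = 0 := by
  simpa using hp.linearMap_apply_eq_coeff_mul φ 0 0 fun u hu => by simp [hφ u hu]

end MvPolynomial.IsHomogeneous

theorem Finsupp.eq_single_two_iff {u : Fin 3 →₀ ℕ} {n : ℕ} (hu : u.degree = n) :
    u = Finsupp.single 2 n ↔ u 0 = 0 ∧ u 1 = 0 := by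
  rw [Finsupp.degree_eq_sum, Fin.sum_univ_three] at hu
  refine ⟨fun h => by simp [h], fun ⟨h₀, h₁⟩ => ?_⟩
  ext i
  fin_cases i <;> simp [h₀, h₁]
  omega

section ProjectivePlane

open FiniteField

variable {F : Type*} [Field F]

theorem ev_apply (p : MvPolynomial (Fin 3) F) (Q : stdRep F) :
    ev F p Q = eval (Q : Fin 3 → F) p := by
  simp [ev, aeval_eq_eval]

theorem ev_mul (p p' : MvPolynomial (Fin 3) F) : ev F (p * p') = ev F p * ev F p' := by
  funext Q
  simp [ev_apply]

variable [Fintype F]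

/-- Every representative in `stdRep F` occurs exactly once in this sum. -/
noncomputable def planeSum : (stdRep F → F) →ₗ[F] F :=
  (∑ y : F, ∑ z : F, LinearMap.proj (⟨![1, y, z], Or.inl rfl⟩ : stdRep F)) +
    (∑ z : F, LinearMap.proj (⟨![0, 1, z], Or.inr (Or.inl ⟨rfl, rfl⟩)⟩ : stdRep F)) +
    LinearMap.proj (⟨![0, 0, 1], Or.inr (Or.inr ⟨rfl, rfl, rfl⟩)⟩ : stdRep F)

theorem planeSum_ev_monomial (u : Fin 3 →₀ ℕ) :
    planeSum (ev F (monomial u 1)) =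
      (∑ y : F, y ^ u 1) * (∑ z : F, z ^ u 2) + 0 ^ u 0 * ∑ z : F, z ^ u 2 +
        0 ^ u 0 * 0 ^ u 1 := by
  rw [Finset.sum_mul_sum, Finset.mul_sum]
  simp [planeSum, ev_apply, eval_monomial, Finsupp.prod_pow, Fin.prod_univ_three]

theorem planeSum_ev_monomial_eq_zero {u : Fin 3 →₀ ℕ}
    (hu : u.degree = 2 * (Fintype.card F - 1)) : planeSum (ev F (monomial u 1)) = 0 := by
  have hq : 1 < Fintype.card F := Fintype.one_lt_card
  rw [Finsupp.degree_eq_sum, Fin.sum_univ_three] at hu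
  rw [planeSum_ev_monomial, sum_pow_of_le_two_mul (by omega), sum_pow_of_le_two_mul (by omega),
    zero_pow_eq, zero_pow_eq]
  split_ifs <;> first | omega | norm_num

theorem planeSum_ev_monomial_single_one_add_single_two_add {s t n : ℕ} {u : Fin 3 →₀ ℕ}
    (hs₀ : s ≠ 0) (hs : s < Fintype.card F - 1) (ht : n + t = Fintype.card F - 1)
    (hu : u.degree = n) :
    planeSum (ev F (monomial (Finsupp.single 1 s + Finsupp.single 2 t + u) 1)) =
      if u = Finsupp.single 2 n then -1 else 0 := by
  simp only [Finsupp.eq_single_two_iff hu]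
  rw [Finsupp.degree_eq_sum, Fin.sum_univ_three] at hu
  rw [planeSum_ev_monomial]
  simp only [Finsupp.add_apply, Finsupp.single_apply, Fin.reduceEq, if_true, if_false, zero_add]
  rw [sum_pow_of_le_two_mul (by omega), sum_pow_of_le_two_mul (by omega), zero_pow_eq, zero_pow_eq]
  split_ifs <;> first | omega | norm_num

theorem planeSum_ev_monomial_single_two_add {t n : ℕ} {u : Fin 3 →₀ ℕ}
    (ht : n + t < Fintype.card F - 1) (hu : u.degree = n) :
    planeSum (ev F (monomial (Finsupp.single 2 t + u) 1)) =
      if u = Finsupp.single 2 n then 1 else 0 := by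
  simp only [Finsupp.eq_single_two_iff hu]
  rw [Finsupp.degree_eq_sum, Fin.sum_univ_three] at hu
  rw [planeSum_ev_monomial]
  simp only [Finsupp.add_apply, Finsupp.single_apply, Fin.reduceEq, if_true, if_false, zero_add]
  rw [sum_pow_of_le_two_mul (by omega), sum_pow_of_le_two_mul (by omega), zero_pow_eq, zero_pow_eq]
  split_ifs <;> first | omega | norm_num

theorem planeSum_ev_eq_zero_of_isHomogeneous {p : MvPolynomial (Fin 3) F}
    (hp : p.IsHomogeneous (2 * (Fintype.card F - 1))) : planeSum (ev F p) = 0 :=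
  hp.linearMap_apply_eq_zero (planeSum ∘ₗ ev F) fun _ hu => planeSum_ev_monomial_eq_zero hu

theorem planeSum_ev_X_pow_mul_X_pow_mul {s t n : ℕ} {f : MvPolynomial (Fin 3) F}
    (hs₀ : s ≠ 0) (hs : s < Fintype.card F - 1) (ht : n + t = Fintype.card F - 1)
    (hf : f.IsHomogeneous n) :
    planeSum (ev F (X 1 ^ s * X 2 ^ t * f)) = -coeff (Finsupp.single 2 n) f := by
  rw [← mul_neg_one]
  exact hf.linearMap_apply_eq_coeff_mul
    (planeSum ∘ₗ ev F ∘ₗ LinearMap.mulLeft F (X 1 ^ s * X 2 ^ t)) _ _ fun u hu => by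
      simpa [X_pow_eq_monomial, monomial_mul] using
        planeSum_ev_monomial_single_one_add_single_two_add hs₀ hs ht hu

theorem planeSum_ev_X_pow_mul {t n : ℕ} {f : MvPolynomial (Fin 3) F}
    (ht : n + t < Fintype.card F - 1) (hf : f.IsHomogeneous n) :
    planeSum (ev F (X 2 ^ t * f)) = coeff (Finsupp.single 2 n) f := by
  rw [← mul_one (coeff _ f)]
  exact hf.linearMap_apply_eq_coeff_mul
    (planeSum ∘ₗ ev F ∘ₗ LinearMap.mulLeft F (X 2 ^ t)) _ _ fun u hu => by
      simpa [X_pow_eq_monomial, monomial_mul] using planeSum_ev_monomial_single_two_add ht hu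

theorem coeff_single_two_eq_zero_of_ev_eq {d₁ d₂ : ℕ} {f g : MvPolynomial (Fin 3) F}
    (hf : f.IsHomogeneous d₁) (hg : g.IsHomogeneous d₂) (hfg : ev F f = ev F g)
    (hd₁ : d₁ < Fintype.card F) (h₁₂ : d₁ < d₂) (hd₂ : d₂ ≤ 2 * (Fintype.card F - 1))
    (hk : d₂ - d₁ ≠ Fintype.card F - 1) : coeff (Finsupp.single 2 d₁) f = 0 := by
  have hq : 1 < Fintype.card F := Fintype.one_lt_card
  have planeSum_mul_eq_zero : ∀ M : MvPolynomial (Fin 3) F,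
      M.IsHomogeneous (2 * (Fintype.card F - 1) - d₂) → planeSum (ev F (M * f)) = 0 := by
    intro M hM
    rw [ev_mul, hfg, ← ev_mul]
    exact planeSum_ev_eq_zero_of_isHomogeneous (Nat.sub_add_cancel hd₂ ▸ hM.mul hg)
  rcases hk.lt_or_gt with hk | hk
  · have hM := (isHomogeneous_X_pow (R := F) (1 : Fin 3) (Fintype.card F - 1 - (d₂ - d₁))).mul
      (isHomogeneous_X_pow (2 : Fin 3) (Fintype.card F - 1 - d₁))
    rw [show Fintype.card F - 1 - (d₂ - d₁) + (Fintype.card F - 1 - d₁) =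
      2 * (Fintype.card F - 1) - d₂ by omega] at hM
    have := planeSum_mul_eq_zero _ hM
    rwa [planeSum_ev_X_pow_mul_X_pow_mul (by omega) (by omega) (by omega) hf, neg_eq_zero] at this
  · rw [← planeSum_ev_X_pow_mul (t := 2 * (Fintype.card F - 1) - d₂) (by omega) hf]
    exact planeSum_mul_eq_zero _ (isHomogeneous_X_pow _ _)

/- On the representatives, `x₀ ^ k` is `1` where `x₀ ≠ 0`, while `(xᵢ ^ r - x₀ ^ r) * xᵢ ^ m`
(`m ≠ 0`) vanishes there and equals `xᵢ ^ m` on the line `x₀ = 0`, where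
`x₂ ^ (a + k) + x₁ ^ k x₂ ^ a` agrees with the right-hand side. -/
theorem ev_X_zero_pow_mul_add_eq {r a k : ℕ} (hr : Fintype.card F = r + 1) (ha : a ≠ 0)
    (hk : k ≠ 0) (hkr : k < r) :
    ev F (X 0 ^ k * (X 2 ^ (a + r) + X 1 ^ (r - k) * X 2 ^ (a + k)) +
        (X 2 ^ r - X 0 ^ r) * X 2 ^ (a + k) + (X 1 ^ r - X 0 ^ r) * (X 1 ^ k * X 2 ^ a)) =
      ev F (X 2 ^ (a + r) + X 1 ^ (r - k) * X 2 ^ (a + k)) := by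
  have hr₀ : r ≠ 0 := by omega
  have reduce (x : F) {m : ℕ} (hm : m ≠ 0) : x ^ r * x ^ m = x ^ m := by
    rw [← pow_add, add_comm, ← pow_add_card_sub_one x hm, hr, Nat.add_sub_cancel]
  funext ⟨v, hv⟩
  simp only [ev_apply, map_add, map_sub, map_mul, map_pow, eval_X]
  rcases hv with h₀ | ⟨h₀, h₁⟩ | ⟨h₀, h₁, h₂⟩
  · rw [h₀, one_pow, one_pow]
    linear_combination reduce (v 2) (m := a + k) (by omega) + v 2 ^ a * reduce (v 1) hk
  · rw [h₀, h₁, zero_pow hk, zero_pow hr₀, one_pow, one_pow]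
    linear_combination reduce (v 2) (m := a + k) (by omega) - reduce (v 2) ha
  · simp [h₀, h₁, h₂, hr₀, zero_pow hk, zero_pow (show r - k ≠ 0 by omega)]

theorem exists_ev_mem_PRM_of_card_le {d₁ d₂ : ℕ} (hd₁ : Fintype.card F ≤ d₁) (h₁₂ : d₁ < d₂)
    (hd₂ : d₂ ≤ 2 * (Fintype.card F - 1)) :
    ∃ f : MvPolynomial (Fin 3) F, f ∈ homogeneousSubmodule (Fin 3) F d₁ ∧
      coeff (Finsupp.single 2 d₁) f ≠ 0 ∧ ev F f ∈ PRM F d₂ := by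
  obtain ⟨r, hr⟩ : ∃ r, Fintype.card F = r + 1 :=
    ⟨_, (Nat.succ_pred_eq_of_pos Fintype.card_pos).symm⟩
  rw [hr, Nat.add_sub_cancel] at hd₂
  rw [hr] at hd₁
  obtain ⟨a, rfl⟩ : ∃ a, d₁ = a + r := ⟨d₁ - r, by omega⟩
  obtain ⟨k, rfl⟩ : ∃ k, d₂ = a + r + k := ⟨d₂ - (a + r), by omega⟩
  have hX (i : Fin 3) (m : ℕ) : (X i ^ m : MvPolynomial (Fin 3) F).IsHomogeneous m :=
    isHomogeneous_X_pow i m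
  have deg {p : MvPolynomial (Fin 3) F} {m n : ℕ} (h : m = n) (hp : p.IsHomogeneous m) :
      p.IsHomogeneous n := h ▸ hp
  have hf : (X 2 ^ (a + r) + X 1 ^ (r - k) * X 2 ^ (a + k) :
      MvPolynomial (Fin 3) F).IsHomogeneous (a + r) :=
    (hX 2 _).add (deg (by omega) ((hX 1 _).mul (hX 2 _)))
  refine ⟨_, hf, ?_, Submodule.mem_map.mpr
    ⟨_, ?_, ev_X_zero_pow_mul_add_eq hr (by omega) (by omega) (by omega)⟩⟩
  · rw [coeff_add, coeff_X_pow, if_pos rfl, X_pow_eq_monomial (n := (1 : Fin 3)),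
      coeff_monomial_mul',
      if_neg (by rw [Finsupp.single_le_iff, Finsupp.single_eq_of_ne (by decide)]; omega)]
    simp
  · exact ((deg (by omega) ((hX 0 k).mul hf)).add
      (deg (by omega) (((hX 2 r).sub (hX 0 r)).mul (hX 2 (a + k))))).add
      (deg (by omega) (((hX 1 r).sub (hX 0 r)).mul ((hX 1 k).mul (hX 2 a))))

end ProjectivePlane

theorem stmt5_general {F : Type*} [Field F] [Fintype F] (q d₁ d₂ : ℕ)
    (hq : Fintype.card F = q) (h12 : d₁ < d₂) (h2 : d₂ ≤ 2 * (q - 1))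
    (hmod : ¬ d₁ ≡ d₂ [MOD q - 1]) :
    (∃ f : MvPolynomial (Fin 3) F, f ∈ homogeneousSubmodule (Fin 3) F d₁ ∧
      coeff (Finsupp.single 2 d₁) f ≠ 0 ∧ ev F f ∈ PRM F d₂) ↔ q ≤ d₁ := by
  subst hq
  refine ⟨fun ⟨f, hf, hcoeff, g, hg, hgf⟩ => ?_,
    fun hd₁ => exists_ev_mem_PRM_of_card_le hd₁ h12 h2⟩
  by_contra hd₁
  have hk : d₂ - d₁ ≠ Fintype.card F - 1 := fun hk =>
    hmod ((Nat.modEq_iff_dvd' h12.le).2 (hk ▸ dvd_rfl))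
  exact hcoeff (coeff_single_two_eq_zero_of_ev_eq hf hg hgf.symm (not_le.mp hd₁) h12 h2 hk)

/-- Let `1 ≤ d₁ < d₂ ≤ 2(q−1)` with `d₁ ≢ d₂ (mod q−1)`. There is a
homogeneous polynomial `f` of degree `d₁` with nonzero coefficient on `x₂^{d₁}` and
`ev(f) ∈ PRM_{d₂}(q,2)` if and only if `d₁ ≥ q`. -/
theorem stmt5 {F : Type*} [Field F] [Fintype F] (q d₁ d₂ : ℕ)
    (hq : Fintype.card F = q) (h1 : 1 ≤ d₁) (h12 : d₁ < d₂) (h2 : d₂ ≤ 2 * (q - 1))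
    (hmod : ¬ d₁ ≡ d₂ [MOD q - 1]) :
    (∃ f : MvPolynomial (Fin 3) F, f ∈ homogeneousSubmodule (Fin 3) F d₁ ∧
      coeff (Finsupp.single 2 d₁) f ≠ 0 ∧ ev F f ∈ PRM F d₂) ↔ q ≤ d₁ :=
  stmt5_general q d₁ d₂ hq h12 h2 hmod
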